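/- arXiv:2106.05010 — 3 statements merged into one kernel-verified Lean document; each statement's English description precedes it below -/
import Mathlib

section
/- (Loss-function-based second-order Jensen inequality.) Let q be a probability distribution over Θ and suppose 0 < p(x|θ) ≤ M_x := max_θ p(x|θ) < ∞ for all θ. Then E_q[ln p(x|θ)] ≤ ln E_q[p(x|θ)] - E_q[((ln p(x|θ) - E_q ln p(x|θ)) / (2 h(x,θ)))²], where h(x,θ)⁻² = exp(ln p(x|θ) + E_q[ln p(x|θ)] - 2 ln M_x). The subtracted term is a nonnegative weighted variance of the log-likelihood, so this inequality is at least as tight as the standard Jensen inequality. -/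
open MeasureTheory

/-- For `t ≥ 0`, `e^t (1 - t) + t²/2 ≤ 1`. -/
lemma aux_L1 {t : ℝ} (ht : 0 ≤ t) : Real.exp t * (1 - t) + t ^ 2 / 2 ≤ 1 := by
  rcases le_or_gt t 1 with h1 | h1
  · have hb := Real.exp_bound' ht h1 (n := 3) (by norm_num)
    have : Real.exp t ≤ 1 + t + t ^ 2 / 2 + t ^ 3 * (2 / 9) := by
      refine hb.trans_eq ?_
      simp [Finset.sum_range_succ, Nat.factorial]
      ring
    nlinarith [Real.exp_pos t, pow_nonneg ht 3, pow_nonneg ht 4]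
  · have hq := Real.quadratic_le_exp_of_nonneg ht
    nlinarith [Real.exp_pos t]

/-- Pointwise second-order bound: if `0 < m ≤ min(1, e^y)` then
`1 + y + y² m / 2 ≤ e^y`. -/
lemma aux_core {y m : ℝ} (hm0 : 0 < m) (hm1 : m ≤ 1) (hm2 : m ≤ Real.exp y) :
    1 + y + y ^ 2 * m / 2 ≤ Real.exp y := by
  rcases le_or_gt 0 y with hy | hy
  · have hq := Real.quadratic_le_exp_of_nonneg hy
    nlinarith [sq_nonneg y]
  · -- y < 0 : use m ≤ e^y and e^t(1-t)+t²/2 ≤ 1 with t = -y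
    have ht : (0:ℝ) ≤ -y := by linarith
    have h1 := aux_L1 ht
    have hexp : Real.exp (-y) * Real.exp y = 1 := by
      rw [← Real.exp_add]; simp
    have hpos := Real.exp_pos y
    have hpos' := Real.exp_pos (-y)
    -- from h1 : exp(-y)*(1+y) + y²/2 ≤ 1, multiply by exp y
    have key : 1 + y + y ^ 2 * Real.exp y / 2 ≤ Real.exp y := by
      nlinarith [mul_le_mul_of_nonneg_right h1 hpos.le, sq_nonneg y]
    nlinarith [sq_nonneg y]

/-- If `0 < m ≤ e^y` and `m ≤ e^{-y}` then `y² m / 4 ≤ 1/2`. -/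
lemma aux_Rbound {y m : ℝ} (hm0 : 0 < m) (hm2 : m ≤ Real.exp y)
    (hm3 : m ≤ Real.exp (-y)) : y ^ 2 * m / 4 ≤ 1 / 2 := by
  have habs : m ≤ Real.exp (-|y|) := by
    rcases le_or_gt 0 y with hy | hy
    · simpa [abs_of_nonneg hy] using hm3
    · simpa [abs_of_neg hy] using hm2
  have hq := Real.quadratic_le_exp_of_nonneg (abs_nonneg y)
  have h2 : |y| ^ 2 ≤ 2 * Real.exp |y| := by nlinarith [abs_nonneg y]
  have hexp : Real.exp (-|y|) * Real.exp |y| = 1 := by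
    rw [← Real.exp_add]; simp
  have hy2 : y ^ 2 = |y| ^ 2 := (sq_abs y).symm
  have hpos := Real.exp_pos |y|
  have hpos' := Real.exp_pos (-|y|)
  nlinarith [mul_le_mul_of_nonneg_right habs (sq_nonneg y),
    mul_le_mul_of_nonneg_left h2 hpos'.le]

/-- For `0 ≤ r ≤ 1/2`, `e^r ≤ 1 + 2r`. -/
lemma aux_L3 {r : ℝ} (h0 : 0 ≤ r) (h1 : r ≤ 1 / 2) : Real.exp r ≤ 1 + 2 * r := by
  have h2 : 1 - r ≤ Real.exp (-r) := by
    have := Real.add_one_le_exp (-r); linarith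
  have hexp : Real.exp (-r) * Real.exp r = 1 := by rw [← Real.exp_add]; simp
  have hpos := Real.exp_pos r
  nlinarith [mul_le_mul_of_nonneg_right h2 hpos.le]

/-- Loss-function-based second-order Jensen inequality (Theorem 3). -/
theorem stmt_7 {Θ : Type*} [MeasurableSpace Θ] (q : Measure Θ)
    [IsProbabilityMeasure q]
    (p : Θ → ℝ) (M : ℝ) (hM : 0 < M)
    (hp : ∀ θ, 0 < p θ ∧ p θ ≤ M)
    (E : ℝ) (hE : E = ∫ θ, Real.log (p θ) ∂q)
    (h : Θ → ℝ)
    (hdef : ∀ θ, (h θ)⁻¹ ^ 2 =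
      Real.exp (Real.log (p θ) + E - 2 * Real.log M))
    (hhpos : ∀ θ, 0 < h θ)
    (hintp : Integrable p q)
    (hintlog : Integrable (fun θ => Real.log (p θ)) q)
    (hintR : Integrable (fun θ => ((Real.log (p θ) - E) / (2 * h θ)) ^ 2) q) :
    E ≤ Real.log (∫ θ, p θ ∂q) -
        ∫ θ, ((Real.log (p θ) - E) / (2 * h θ)) ^ 2 ∂q := by
  set L : Θ → ℝ := fun θ => Real.log (p θ) with hL
  set R : Θ → ℝ := fun θ => ((L θ - E) / (2 * h θ)) ^ 2 with hR
  -- log p θ ≤ log M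
  have hLM : ∀ θ, L θ ≤ Real.log M := fun θ =>
    Real.log_le_log (hp θ).1 (hp θ).2
  -- E ≤ log M
  have hEM : E ≤ Real.log M := by
    rw [hE]
    calc ∫ θ, L θ ∂q ≤ ∫ _, Real.log M ∂q :=
          integral_mono hintlog (integrable_const _) hLM
      _ = Real.log M := by simp
  -- the weight m θ
  set m : Θ → ℝ := fun θ => Real.exp (L θ + E - 2 * Real.log M) with hm
  have hm0 : ∀ θ, 0 < m θ := fun θ => Real.exp_pos _
  have hm1 : ∀ θ, m θ ≤ 1 := by
    intro θ
    rw [hm]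
    calc Real.exp (L θ + E - 2 * Real.log M) ≤ Real.exp 0 :=
          Real.exp_le_exp.2 (by have := hLM θ; have := hEM; linarith)
      _ = 1 := Real.exp_zero
  have hm2 : ∀ θ, m θ ≤ Real.exp (L θ - E) := fun θ =>
    Real.exp_le_exp.2 (by have := hEM; linarith)
  have hm3 : ∀ θ, m θ ≤ Real.exp (-(L θ - E)) := fun θ =>
    Real.exp_le_exp.2 (by have := hLM θ; linarith)
  -- R θ = (L θ - E)^2 * m θ / 4
  have hReq : ∀ θ, R θ = (L θ - E) ^ 2 * m θ / 4 := by
    intro θ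
    have hh := (hhpos θ).ne'
    have := hdef θ
    have h1 : m θ = (h θ)⁻¹ ^ 2 := (hdef θ).symm
    show ((L θ - E) / (2 * h θ)) ^ 2 = (L θ - E) ^ 2 * m θ / 4
    rw [h1, inv_pow, div_pow, mul_pow, eq_div_iff (by norm_num : (4:ℝ) ≠ 0),
      div_mul_eq_mul_div, mul_comm ((L θ - E) ^ 2) ((h θ ^ 2)⁻¹),
      div_eq_iff (by positivity : (2:ℝ) ^ 2 * h θ ^ 2 ≠ 0)]
    have h2 : (h θ) ^ 2 ≠ 0 := pow_ne_zero _ hh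
    field_simp
    ring
  -- pointwise bound on R
  have hRle : ∀ θ, R θ ≤ 1 / 2 := by
    intro θ
    rw [hReq θ]
    exact aux_Rbound (hm0 θ) (hm2 θ) (hm3 θ)
  have hRnn : ∀ θ, 0 ≤ R θ := fun θ => sq_nonneg _
  -- pointwise: exp E * (1 + (L θ - E) + 2 * R θ) ≤ p θ
  have hpoint : ∀ θ, Real.exp E * (1 + (L θ - E) + 2 * R θ) ≤ p θ := by
    intro θ
    have hcore := aux_core (hm0 θ) (hm1 θ) (hm2 θ) (y := L θ - E)
    have h1 : Real.exp E * Real.exp (L θ - E) = p θ := by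
      rw [← Real.exp_add]
      have : E + (L θ - E) = L θ := by ring
      rw [this, hL]
      exact Real.exp_log (hp θ).1
    have h2 : 1 + (L θ - E) + 2 * R θ = 1 + (L θ - E) + (L θ - E) ^ 2 * m θ / 2 := by
      rw [hReq θ]; ring
    rw [h2, ← h1]
    exact mul_le_mul_of_nonneg_left hcore (Real.exp_pos E).le
  -- integrate
  set r : ℝ := ∫ θ, R θ ∂q with hr
  have hrnn : 0 ≤ r := integral_nonneg hRnn
  have hrle : r ≤ 1 / 2 := by
    rw [hr]
    calc ∫ θ, R θ ∂q ≤ ∫ _, (1:ℝ)/2 ∂q :=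
          integral_mono hintR (integrable_const _) hRle
      _ = 1/2 := by simp
  have hintL : Integrable (fun θ => L θ - E) q := hintlog.sub (integrable_const E)
  have hintLHS : Integrable (fun θ => Real.exp E * (1 + (L θ - E) + 2 * R θ)) q := by
    apply Integrable.const_mul
    exact ((integrable_const (1:ℝ)).add hintL).add (hintR.const_mul 2)
  have hmono : ∫ θ, Real.exp E * (1 + (L θ - E) + 2 * R θ) ∂q ≤ ∫ θ, p θ ∂q :=
    integral_mono hintLHS hintp hpoint
  have hIL : ∫ θ, Real.exp E * (1 + (L θ - E) + 2 * R θ) ∂q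
      = Real.exp E * (1 + 2 * r) := by
    rw [integral_const_mul]
    have hi1 : Integrable (fun θ => 1 + (L θ - E)) q :=
      (integrable_const (1:ℝ)).add hintL
    have hz : ∫ θ, (L θ - E) ∂q = 0 := by
      rw [integral_sub hintlog (integrable_const E), integral_const]
      simp [← hE]
    have e1 : ∫ θ, (1 + (L θ - E) + 2 * R θ) ∂q
        = (∫ θ, (1 + (L θ - E)) ∂q) + ∫ θ, 2 * R θ ∂q :=
      integral_add hi1 (hintR.const_mul 2)
    have e2 : ∫ θ, (1 + (L θ - E)) ∂q
        = (∫ _, (1:ℝ) ∂q) + ∫ θ, (L θ - E) ∂q :=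
      integral_add (integrable_const (1:ℝ)) hintL
    have : ∫ θ, (1 + (L θ - E) + 2 * R θ) ∂q = 1 + 0 + 2 * r := by
      rw [e1, e2, hz, integral_const, integral_const_mul, hr]
      simp
    rw [this]; ring
  have hkey : Real.exp E * (1 + 2 * r) ≤ ∫ θ, p θ ∂q := hIL ▸ hmono
  have hIpos : 0 < ∫ θ, p θ ∂q := by
    have : (0:ℝ) < Real.exp E * (1 + 2 * r) := by positivity
    linarith
  have hfinal : Real.exp (E + r) ≤ ∫ θ, p θ ∂q := by
    rw [Real.exp_add]
    calc Real.exp E * Real.exp r ≤ Real.exp E * (1 + 2 * r) :=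
          mul_le_mul_of_nonneg_left (aux_L3 hrnn hrle) (Real.exp_pos E).le
      _ ≤ _ := hkey
  have := (Real.le_log_iff_exp_le hIpos).2 hfinal
  linarith
end

section
/- (Jensen refinement via a log-likelihood kernel, w-SGLD form.) Let θ₁,…,θ_N with p(x|θᵢ) ∈ (0, ∞), let ρ_E be the uniform empirical distribution on the θᵢ, let h_w > 0 be defined by h_w⁻² = exp(minᵢ ln p(x|θᵢ) + (1/N)Σᵢ ln p(x|θᵢ) - 2 maxⱼ ln p(x|θⱼ)), and define the Gram matrix G_{ij} = exp(-(8 h_w²)⁻¹ (ln p(x|θᵢ) - ln p(x|θⱼ))²). Then ln E_{ρ_E}[p(x|θ)] ≥ E_{ρ_E}[ln p(x|θ)] - (1/N) Σᵢ ln( (1/N) Σⱼ G_{ij} ) ≥ E_{ρ_E}[ln p(x|θ)]. -/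
lemma aux_exp_quad (x y : ℝ) (hy0 : y ≤ 0) (hyx : y ≤ x) :
    1 + x + x ^ 2 / 4 * Real.exp y ≤ Real.exp x := by
  have hey1 : Real.exp y ≤ 1 := Real.exp_le_one_iff.2 hy0
  have heyx : Real.exp y ≤ Real.exp x := Real.exp_le_exp.2 hyx
  have hey0 : 0 < Real.exp y := Real.exp_pos y
  rcases le_or_gt 0 x with hx | hx
  · have h1 : x / 2 + 1 ≤ Real.exp (x / 2) := Real.add_one_le_exp _
    have h2 : Real.exp (x / 2) * Real.exp (x / 2) = Real.exp x := by
      rw [← Real.exp_add]; ring_nf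
    nlinarith [Real.exp_pos (x / 2), sq_nonneg x]
  rcases le_or_gt (-1) x with hx1 | hx1
  · have hb := Real.exp_bound (x := x) (by rw [abs_le]; constructor <;> linarith)
      (n := 3) (by norm_num)
    rw [abs_sub_le_iff] at hb
    have hb2 := hb.2
    have hsum : ∑ m ∈ Finset.range 3, x ^ m / m.factorial = 1 + x + x ^ 2 / 2 := by
      norm_num [Finset.sum_range_succ]
    rw [hsum] at hb2
    have habs : |x| = -x := abs_of_neg hx
    rw [habs] at hb2
    have : (1:ℝ) + x + x ^ 2 / 2 - Real.exp x ≤ (-x) ^ 3 * (2 / 9) := by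
      refine hb2.trans_eq ?_; norm_num [Nat.factorial]
    nlinarith [sq_nonneg x]
  · have h1 : (-x) + 1 ≤ Real.exp (-x) := Real.add_one_le_exp _
    have h2 : Real.exp x * Real.exp (-x) = 1 := by rw [← Real.exp_add]; simp
    have hx0 : 0 < Real.exp x := Real.exp_pos x
    have key : 1 + x + x ^ 2 / 4 * Real.exp x ≤ Real.exp x := by
      rcases le_or_gt (x ^ 2 / 4) 1 with h | h
      · nlinarith
      · have hE : Real.exp x ≤ 1 / (1 - x) := by
          rw [le_div_iff₀ (by linarith)]
          nlinarith
        nlinarith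
    nlinarith [sq_nonneg x]

lemma aux_amgm {n : ℕ} (a : Fin (n + 1) → ℝ) :
    (n + 1 : ℝ) * Real.exp ((∑ i, a i) / (n + 1 : ℝ)) ≤ ∑ i, Real.exp (a i) := by
  have hN : (0:ℝ) < (n + 1 : ℝ) := by positivity
  set A := (∑ i, a i) / (n + 1 : ℝ) with hA
  have hsA : ∑ i, a i = (n + 1 : ℝ) * A := by rw [hA]; field_simp
  have h1 : ∀ i : Fin (n + 1), Real.exp A * (1 + (a i - A)) ≤ Real.exp (a i) := by
    intro i
    have h := Real.add_one_le_exp (a i - A)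
    have h2 : Real.exp A * Real.exp (a i - A) = Real.exp (a i) := by
      rw [← Real.exp_add]; ring_nf
    nlinarith [Real.exp_pos A]
  calc (n + 1 : ℝ) * Real.exp A
      = ∑ _i : Fin (n + 1), Real.exp A * (1 + (0:ℝ)) + Real.exp A * (∑ i, (a i - A)) := by
        rw [Finset.sum_sub_distrib, hsA, Finset.sum_const]
        simp [Finset.card_univ]
    _ = ∑ i : Fin (n + 1), Real.exp A * (1 + (a i - A)) := by
        rw [Finset.mul_sum, ← Finset.sum_add_distrib]
        congr 1; funext i; ring
    _ ≤ ∑ i, Real.exp (a i) := Finset.sum_le_sum fun i _ => h1 i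

set_option maxHeartbeats 1000000 in
/-- Jensen refinement via a log-likelihood kernel (w-SGLD form). -/
theorem stmt_17 (n : ℕ) (p : Fin (n + 1) → ℝ) (hp : ∀ i, 0 < p i)
    (L : Fin (n + 1) → ℝ) (hL : ∀ i, L i = Real.log (p i))
    (hw : ℝ) (hwpos : 0 < hw)
    (hhw : hw⁻¹ ^ 2 =
      Real.exp ((Finset.univ.inf' Finset.univ_nonempty L) +
        (∑ i, L i) / (n + 1 : ℝ) -
        2 * (Finset.univ.sup' Finset.univ_nonempty L)))
    (G : Fin (n + 1) → Fin (n + 1) → ℝ)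
    (hG : ∀ i j, G i j = Real.exp (-(8 * hw ^ 2)⁻¹ * (L i - L j) ^ 2)) :
    (∑ i, L i) / (n + 1 : ℝ) -
        (1 / (n + 1 : ℝ)) * ∑ i, Real.log ((∑ j, G i j) / (n + 1 : ℝ)) ≤
      Real.log ((∑ i, p i) / (n + 1 : ℝ)) ∧
    (∑ i, L i) / (n + 1 : ℝ) ≤
      (∑ i, L i) / (n + 1 : ℝ) -
        (1 / (n + 1 : ℝ)) * ∑ i, Real.log ((∑ j, G i j) / (n + 1 : ℝ)) := by
  have hN : (0:ℝ) < (n + 1 : ℝ) := by positivity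
  set m := Finset.univ.inf' Finset.univ_nonempty L with hmdef
  set M := Finset.univ.sup' Finset.univ_nonempty L with hMdef
  set μ := (∑ i, L i) / (n + 1 : ℝ) with hμdef
  have hmle : ∀ i, m ≤ L i := fun i => Finset.inf'_le _ (Finset.mem_univ i)
  have hMle : ∀ i, L i ≤ M := fun i => Finset.le_sup' _ (Finset.mem_univ i)
  have hsumL : ∑ i, L i = (n + 1 : ℝ) * μ := by rw [hμdef]; field_simp
  have hmμ : m ≤ μ := by
    rw [hμdef, le_div_iff₀ hN]
    calc m * (n + 1 : ℝ) = ∑ _i : Fin (n + 1), m := by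
          simp [Finset.sum_const, Finset.card_univ, mul_comm]
      _ ≤ ∑ i, L i := Finset.sum_le_sum fun i _ => hmle i
  have hμM : μ ≤ M := by
    rw [hμdef, div_le_iff₀ hN]
    calc ∑ i, L i ≤ ∑ _i : Fin (n + 1), M := Finset.sum_le_sum fun i _ => hMle i
      _ = M * (n + 1 : ℝ) := by simp [Finset.sum_const, Finset.card_univ, mul_comm]
  set V := ∑ i, (L i - μ) ^ 2 with hVdef
  have hV0 : 0 ≤ V := Finset.sum_nonneg fun i _ => sq_nonneg _
  have hXsum : ∑ i, (L i - μ) = 0 := by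
    rw [Finset.sum_sub_distrib, hsumL, Finset.sum_const]
    simp [Finset.card_univ]
  -- variance bound
  have hVbound : V ≤ (n + 1 : ℝ) * ((M - μ) * (μ - m)) := by
    have hid : ∀ i : Fin (n + 1), (L i - μ) ^ 2 + (M - L i) * (L i - m) =
        (M + m - 2 * μ) * L i + (μ ^ 2 - M * m) := fun i => by ring
    have hsum2 : V + ∑ i, (M - L i) * (L i - m) = (n + 1 : ℝ) * ((M - μ) * (μ - m)) := by
      rw [hVdef, ← Finset.sum_add_distrib]
      rw [Finset.sum_congr rfl fun i _ => hid i, Finset.sum_add_distrib,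
        ← Finset.mul_sum, hsumL, Finset.sum_const]
      simp [Finset.card_univ]
      ring
    have hnn : 0 ≤ ∑ i, (M - L i) * (L i - m) :=
      Finset.sum_nonneg fun i _ => mul_nonneg (by linarith [hMle i]) (by linarith [hmle i])
    linarith
  -- coefficient
  set E := Real.exp (m + μ - 2 * M) with hEdef
  have hE0 : 0 < E := Real.exp_pos _
  have hcoef : (8 * hw ^ 2)⁻¹ = E / 8 := by
    rw [mul_inv, ← inv_pow, hhw]
    ring
  -- positivity of Gram sums, upper bound 1
  have hGpos : ∀ i j, 0 < G i j := fun i j => by rw [hG]; exact Real.exp_pos _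
  have hGle1 : ∀ i j, G i j ≤ 1 := fun i j => by
    rw [hG, hcoef]
    apply Real.exp_le_one_iff.2
    have : 0 ≤ E / 8 * (L i - L j) ^ 2 := by positivity
    linarith
  have hSpos : ∀ i, 0 < ∑ j, G i j :=
    fun i => Finset.sum_pos (fun j _ => hGpos i j) Finset.univ_nonempty
  have hlog_nonpos : ∀ i, Real.log ((∑ j, G i j) / (n + 1 : ℝ)) ≤ 0 := by
    intro i
    apply Real.log_nonpos (div_pos (hSpos i) hN).le
    rw [div_le_one hN]
    calc ∑ j, G i j ≤ ∑ _j : Fin (n + 1), (1:ℝ) := Finset.sum_le_sum fun j _ => hGle1 i j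
      _ = (n + 1 : ℝ) := by simp [Finset.card_univ]
  have hsum_nonpos : ∑ i, Real.log ((∑ j, G i j) / (n + 1 : ℝ)) ≤ 0 :=
    Finset.sum_nonpos fun i _ => hlog_nonpos i
  have heasy : (0:ℝ) ≤ -((1 / (n + 1 : ℝ)) * ∑ i, Real.log ((∑ j, G i j) / (n + 1 : ℝ))) := by
    rw [neg_nonneg]
    exact mul_nonpos_of_nonneg_of_nonpos (by positivity) hsum_nonpos
  -- pairwise sums of squares
  have hpair : ∀ i : Fin (n + 1), ∑ j, (L i - L j) ^ 2 = (n + 1 : ℝ) * (L i - μ) ^ 2 + V := by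
    intro i
    have hid : ∀ j : Fin (n + 1), (L i - L j) ^ 2 =
        ((L i - μ) ^ 2 - 2 * (L i - μ) * (L j - μ)) + (L j - μ) ^ 2 := fun j => by ring
    rw [Finset.sum_congr rfl fun j _ => hid j, Finset.sum_add_distrib, Finset.sum_sub_distrib,
      ← Finset.mul_sum, hXsum, Finset.sum_const]
    simp [Finset.card_univ]
    exact hVdef.symm
  -- step 2a: lower bound each log term via AM-GM
  have h2a : ∀ i : Fin (n + 1),
      (∑ j, (-(E / 8) * (L i - L j) ^ 2)) / (n + 1 : ℝ) ≤
        Real.log ((∑ j, G i j) / (n + 1 : ℝ)) := by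
    intro i
    have hamgm := aux_amgm (fun j => -(E / 8) * (L i - L j) ^ 2)
    have hGeq : ∀ j, Real.exp (-(E / 8) * (L i - L j) ^ 2) = G i j := by
      intro j; rw [hG, hcoef]
    simp only [hGeq] at hamgm
    have hexp_le : Real.exp ((∑ j, (-(E / 8) * (L i - L j) ^ 2)) / (n + 1 : ℝ)) ≤
        (∑ j, G i j) / (n + 1 : ℝ) := by
      rw [le_div_iff₀ hN]
      linarith [hamgm]
    calc (∑ j, (-(E / 8) * (L i - L j) ^ 2)) / (n + 1 : ℝ)
        = Real.log (Real.exp ((∑ j, (-(E / 8) * (L i - L j) ^ 2)) / (n + 1 : ℝ))) :=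
          (Real.log_exp _).symm
      _ ≤ _ := Real.log_le_log (Real.exp_pos _) hexp_le
  have hlow : -(E / 4) * V ≤ ∑ i, Real.log ((∑ j, G i j) / (n + 1 : ℝ)) := by
    have hterm : ∀ i : Fin (n + 1), (∑ j, (-(E / 8) * (L i - L j) ^ 2)) / (n + 1 : ℝ) =
        -(E / 8) * ((n + 1 : ℝ) * (L i - μ) ^ 2 + V) / (n + 1 : ℝ) := by
      intro i
      rw [← Finset.mul_sum, hpair i]
    calc -(E / 4) * V
        = ∑ i : Fin (n + 1), (-(E / 8) * ((n + 1 : ℝ) * (L i - μ) ^ 2 + V) / (n + 1 : ℝ)) := by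
          have hterm2 : ∀ i : Fin (n + 1), -(E / 8) * ((n + 1 : ℝ) * (L i - μ) ^ 2 + V) / (n + 1 : ℝ)
              = -(E / 8) * (L i - μ) ^ 2 + (-(E / 8) * V / (n + 1 : ℝ)) := fun i => by
            field_simp; ring
          rw [Finset.sum_congr rfl fun i _ => hterm2 i, Finset.sum_add_distrib,
            ← Finset.mul_sum, ← hVdef, Finset.sum_const, Finset.card_univ, Fintype.card_fin,
            nsmul_eq_mul]
          push_cast
          field_simp
          ring
      _ = ∑ i : Fin (n + 1), (∑ j, (-(E / 8) * (L i - L j) ^ 2)) / (n + 1 : ℝ) := by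
          exact Finset.sum_congr rfl fun i _ => (hterm i).symm
      _ ≤ ∑ i, Real.log ((∑ j, G i j) / (n + 1 : ℝ)) :=
          Finset.sum_le_sum fun i _ => h2a i
  -- step 2c: lower bound on sum of p
  have hpexp : ∀ i, p i = Real.exp (L i) := fun i => by
    rw [hL]; exact (Real.exp_log (hp i)).symm
  have hplow : ∀ i : Fin (n + 1),
      Real.exp μ * (1 + (L i - μ) + (L i - μ) ^ 2 / 4 * Real.exp (m - μ)) ≤ p i := by
    intro i
    rw [hpexp i]
    have hq := aux_exp_quad (L i - μ) (m - μ) (by linarith) (by linarith [hmle i])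
    have hsplit : Real.exp (L i) = Real.exp μ * Real.exp (L i - μ) := by
      rw [← Real.exp_add]; ring_nf
    rw [hsplit]
    exact mul_le_mul_of_nonneg_left hq (Real.exp_pos μ).le
  have hsum_p : Real.exp μ * ((n + 1 : ℝ) + Real.exp (m - μ) / 4 * V) ≤ ∑ i, p i := by
    calc Real.exp μ * ((n + 1 : ℝ) + Real.exp (m - μ) / 4 * V)
        = ∑ i : Fin (n + 1), Real.exp μ * (1 + (L i - μ) + (L i - μ) ^ 2 / 4 * Real.exp (m - μ)) := by
          rw [← Finset.mul_sum]
          congr 1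
          rw [Finset.sum_add_distrib, Finset.sum_add_distrib, hXsum, Finset.sum_const,
            Finset.sum_congr rfl (fun i _ => (by ring :
              (L i - μ) ^ 2 / 4 * Real.exp (m - μ) = Real.exp (m - μ) / 4 * (L i - μ) ^ 2)),
            ← Finset.mul_sum, ← hVdef, Finset.card_univ, Fintype.card_fin, nsmul_eq_mul]
          push_cast
          ring
      _ ≤ ∑ i, p i := Finset.sum_le_sum fun i _ => hplow i
  set u := Real.exp (m - μ) * V / (4 * (n + 1 : ℝ)) with hudef
  have hu0 : 0 ≤ u :=
    div_nonneg (mul_nonneg (Real.exp_pos _).le hV0) (by positivity)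
  have h1u : (0:ℝ) < 1 + u := by linarith
  have hpbar : Real.exp μ * (1 + u) ≤ (∑ i, p i) / (n + 1 : ℝ) := by
    rw [le_div_iff₀ hN]
    calc Real.exp μ * (1 + u) * (n + 1 : ℝ)
        = Real.exp μ * ((n + 1 : ℝ) + Real.exp (m - μ) / 4 * V) := by
          have hne : (n + 1 : ℝ) ≠ 0 := ne_of_gt hN
          rw [hudef]
          field_simp
      _ ≤ ∑ i, p i := hsum_p
  have hlogpbar : μ + Real.log (1 + u) ≤ Real.log ((∑ i, p i) / (n + 1 : ℝ)) := by
    calc μ + Real.log (1 + u) = Real.log (Real.exp μ * (1 + u)) := by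
          rw [Real.log_mul (Real.exp_ne_zero μ) (ne_of_gt h1u), Real.log_exp]
      _ ≤ _ := Real.log_le_log (by positivity) hpbar
  -- step 2e
  have hloglb : u / (1 + u) ≤ Real.log (1 + u) := by
    have h := Real.log_le_sub_one_of_pos (show (0:ℝ) < (1 + u)⁻¹ by positivity)
    rw [Real.log_inv] at h
    have heq : u / (1 + u) = 1 - (1 + u)⁻¹ := by field_simp; ring
    rw [heq]; linarith
  have hub : u ≤ (M - μ) / 4 := by
    have hgm : (μ - m) * Real.exp (m - μ) ≤ 1 := by
      have h := Real.add_one_le_exp (μ - m)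
      have hprod : Real.exp (m - μ) * Real.exp (μ - m) = 1 := by
        rw [← Real.exp_add]; simp
      nlinarith [Real.exp_pos (m - μ)]
    have h1 : Real.exp (m - μ) * V ≤ Real.exp (m - μ) * ((n + 1 : ℝ) * ((M - μ) * (μ - m))) :=
      mul_le_mul_of_nonneg_left hVbound (Real.exp_pos _).le
    rw [hudef, div_le_div_iff₀ (by positivity) (by norm_num : (0:ℝ) < 4)]
    nlinarith [h1, mul_le_mul_of_nonneg_left hgm (mul_nonneg hN.le (sub_nonneg.2 hμM)), hN]
  have hKb : Real.exp (2 * μ - 2 * M) * (1 + u) ≤ 1 := by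
    have h3 : (2 * M - 2 * μ) + 1 ≤ Real.exp (2 * M - 2 * μ) := Real.add_one_le_exp _
    have h4 : Real.exp (2 * μ - 2 * M) * Real.exp (2 * M - 2 * μ) = 1 := by
      rw [← Real.exp_add]; simp
    nlinarith [Real.exp_pos (2 * μ - 2 * M), hμM]
  have hKu : Real.exp (2 * μ - 2 * M) * u ≤ Real.log (1 + u) := by
    have h5 : Real.exp (2 * μ - 2 * M) * u ≤ u / (1 + u) := by
      rw [le_div_iff₀ h1u]
      nlinarith [hu0]
    linarith
  have hKuE : Real.exp (2 * μ - 2 * M) * u = E * V / (4 * (n + 1 : ℝ)) := by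
    have hee : Real.exp (2 * μ - 2 * M) * Real.exp (m - μ) = Real.exp (m + μ - 2 * M) := by
      rw [← Real.exp_add]; ring_nf
    rw [hudef, hEdef, ← hee]; ring
  constructor
  · -- main inequality
    have hmul := mul_le_mul_of_nonneg_left hlow
      (le_of_lt (show (0:ℝ) < 1 / (n + 1 : ℝ) by positivity))
    -- hmul : (1/(n+1)) * (-(E/4)*V) ≤ (1/(n+1)) * Σ log
    have hEV : (1 / (n + 1 : ℝ)) * (-(E / 4) * V) = -(E * V / (4 * (n + 1 : ℝ))) := by
      field_simp
    have hfin : E * V / (4 * (n + 1 : ℝ)) ≤ Real.log (1 + u) := by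
      rw [← hKuE]; exact hKu
    linarith [hlogpbar]
  · linarith [heasy]
end

section
/- (Covariance-form second-order Jensen inequality for ensembles.) Let θ₁,…,θ_N satisfy 0 < p(x|θᵢ) < ∞, let Lᵢ = ln p(x|θᵢ), L̄ = (1/N)Σᵢ Lᵢ, and define h_w⁻² = exp(minᵢ Lᵢ + L̄ - 2 maxⱼ Lⱼ). Then L̄ ≤ ln((1/N) Σᵢ p(x|θᵢ)) - (1/(2(2h_w)² N²)) Σ_{i,j=1}^N (Lᵢ - Lⱼ)². -/
open Real


private lemma aux_sinh18 (r : ℝ) (hr : 1 ≤ r) : Real.log r ≤ (r - r⁻¹) / 2 := by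
  have h0 : (0:ℝ) < r := lt_of_lt_of_le one_pos hr
  have h := Real.self_le_sinh_iff.mpr (Real.log_nonneg hr)
  rwa [Real.sinh_log h0] at h

private lemma aux_logmean18 {a b : ℝ} (ha : 0 < a) (hb : 0 < b) (hba : b ≤ a) :
    (Real.log a - Real.log b) ^ 2 * (a * b) ≤ (a - b) ^ 2 := by
  set t := a / b with ht
  have ht1 : 1 ≤ t := (one_le_div hb).mpr hba
  have htpos : 0 < t := lt_of_lt_of_le one_pos ht1
  set s := Real.sqrt t with hs
  have hs1 : 1 ≤ s := by
    rw [hs, show (1:ℝ) = Real.sqrt 1 by simp]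
    exact Real.sqrt_le_sqrt ht1
  have hspos : 0 < s := lt_of_lt_of_le one_pos hs1
  have hs2 : s ^ 2 = t := Real.sq_sqrt htpos.le
  have hlog : Real.log t = 2 * Real.log s := by
    rw [← hs2, Real.log_pow]; push_cast; ring
  have hsinh := aux_sinh18 s hs1
  -- key : (log t)^2 * t ≤ (t-1)^2
  have hkey : (Real.log t) ^ 2 * t ≤ (t - 1) ^ 2 := by
    have h1 : Real.log t * s ≤ t - 1 := by
      have : Real.log t ≤ s - s⁻¹ := by rw [hlog]; linarith
      have h2 : (s - s⁻¹) * s = t - 1 := by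
        field_simp
        nlinarith [hs2]
      nlinarith [hspos, this]
    have hnn : 0 ≤ Real.log t * s := mul_nonneg (Real.log_nonneg ht1) hspos.le
    calc (Real.log t) ^ 2 * t = (Real.log t * s) ^ 2 := by rw [← hs2]; ring
    _ ≤ (t - 1) ^ 2 := by nlinarith [h1, hnn]
  have hlt : Real.log a - Real.log b = Real.log t := by
    rw [ht, Real.log_div (ne_of_gt ha) (ne_of_gt hb)]
  rw [hlt]
  have hab : a = t * b := by rw [ht, div_mul_cancel₀ a (ne_of_gt hb)]
  calc (Real.log t) ^ 2 * (a * b) = ((Real.log t) ^ 2 * t) * b ^ 2 := by rw [hab]; ring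
  _ ≤ (t - 1) ^ 2 * b ^ 2 := by nlinarith [sq_nonneg b, hkey, hb]
  _ = (a - b) ^ 2 := by rw [hab]; ring

private lemma aux_logmean18' (a b : ℝ) (ha : 0 < a) (hb : 0 < b) :
    (Real.log a - Real.log b) ^ 2 * (a * b) ≤ (a - b) ^ 2 := by
  rcases le_total b a with h | h
  · exact aux_logmean18 ha hb h
  · have := aux_logmean18 hb ha h
    calc (Real.log a - Real.log b) ^ 2 * (a * b)
        = (Real.log b - Real.log a) ^ 2 * (b * a) := by ring
    _ ≤ (b - a) ^ 2 := this
    _ = (a - b) ^ 2 := by ring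

private lemma aux_quadlog_small18 {y : ℝ} (hy : 0 < y) (hy1 : y ≤ 1) :
    Real.log y ≤ (y - 1) - (y - 1) ^ 2 / 2 := by
  set f : ℝ → ℝ := fun x => (x - 1) - (x - 1) ^ 2 / 2 - Real.log x with hf
  have hder : ∀ x ∈ Set.Ioi (0:ℝ), HasDerivAt f (1 - (x - 1) - x⁻¹) x := by
    intro x hx
    have h1 : HasDerivAt (fun x : ℝ => x - 1) 1 x := (hasDerivAt_id x).sub_const 1
    have h2 : HasDerivAt (fun x : ℝ => (x - 1) ^ 2 / 2) (x - 1) x := by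
      have := (h1.pow 2).div_const 2
      refine this.congr_deriv ?_
      push_cast; ring
    have h3 : HasDerivAt Real.log x⁻¹ x := Real.hasDerivAt_log (ne_of_gt hx)
    exact (h1.sub h2).sub h3
  have hanti : AntitoneOn f (Set.Ioi (0:ℝ)) := by
    apply antitoneOn_of_deriv_nonpos (convex_Ioi 0)
    · intro x hx
      exact ((hder x hx).continuousAt).continuousWithinAt
    · intro x hx
      rw [interior_Ioi] at hx
      exact (hder x hx).differentiableAt.differentiableWithinAt
    · intro x hx
      rw [interior_Ioi] at hx
      rw [(hder x hx).deriv]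
      have hxpos : (0:ℝ) < x := hx
      have hxi : x * x⁻¹ = 1 := mul_inv_cancel₀ (ne_of_gt hxpos)
      nlinarith [sq_nonneg (x - 1), hxpos]
  have h := hanti (Set.mem_Ioi.mpr hy) (Set.mem_Ioi.mpr one_pos) hy1
  simp [hf] at h
  linarith

private lemma aux_quadlog18 {c y : ℝ} (hc : 1 ≤ c) (hy : 0 < y) (hyc : y ≤ c) :
    Real.log y ≤ (y - 1) - (y - 1) ^ 2 / (2 * c ^ 2) := by
  have hcpos : (0:ℝ) < c := lt_of_lt_of_le one_pos hc
  have hc2 : (0:ℝ) < c ^ 2 := by positivity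
  rcases le_total y 1 with h1 | h1
  · have h := aux_quadlog_small18 hy h1
    have : (y - 1) ^ 2 / (2 * c ^ 2) ≤ (y - 1) ^ 2 / 2 := by
      apply div_le_div_of_nonneg_left (sq_nonneg _) (by norm_num) ?_ <;> nlinarith
    linarith
  · have h := aux_sinh18 y h1
    have hyi : y * y⁻¹ = 1 := mul_inv_cancel₀ (ne_of_gt hy)
    have hyc2 : y ≤ c ^ 2 := le_trans hyc (by nlinarith)
    have heq : (y - y⁻¹) / 2 = (y - 1) - (y - 1) ^ 2 / (2 * y) := by
      field_simp
      ring
    have hcmp : (y - 1) ^ 2 / (2 * c ^ 2) ≤ (y - 1) ^ 2 / (2 * y) := by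
      apply div_le_div_of_nonneg_left (sq_nonneg _) (by positivity) (by linarith)
    linarith


set_option maxHeartbeats 1000000 in
/-- Covariance-form second-order Jensen inequality for ensembles (Theorem 5). -/
theorem stmt_18 (n : ℕ) (p : Fin (n + 1) → ℝ) (hp : ∀ i, 0 < p i)
    (L : Fin (n + 1) → ℝ) (hL : ∀ i, L i = Real.log (p i))
    (Lbar : ℝ) (hLbar : Lbar = (∑ i, L i) / (n + 1 : ℝ))
    (hw : ℝ) (hwpos : 0 < hw)
    (hhw : hw⁻¹ ^ 2 =
      Real.exp ((Finset.univ.inf' Finset.univ_nonempty L) + Lbar -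
        2 * (Finset.univ.sup' Finset.univ_nonempty L))) :
    Lbar ≤ Real.log ((∑ i, p i) / (n + 1 : ℝ)) -
        (1 / (2 * (2 * hw) ^ 2 * (n + 1 : ℝ) ^ 2)) *
          ∑ i, ∑ j, (L i - L j) ^ 2 := by
  have Npos : (0:ℝ) < (n + 1 : ℝ) := by positivity
  set N : ℝ := (n + 1 : ℝ) with hN
  set maxL := Finset.univ.sup' Finset.univ_nonempty L with hmaxL
  set minL := Finset.univ.inf' Finset.univ_nonempty L with hminL
  set b := Real.exp Lbar with hb
  set M := Real.exp maxL with hM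
  have hbpos : 0 < b := Real.exp_pos _
  have hMpos : 0 < M := Real.exp_pos _
  have hpe : ∀ i, p i = Real.exp (L i) := fun i => by rw [hL, Real.exp_log (hp i)]
  have hLmax : ∀ i, L i ≤ maxL := fun i => Finset.le_sup' L (Finset.mem_univ i)
  have hLmin : ∀ i, minL ≤ L i := fun i => Finset.inf'_le L (Finset.mem_univ i)
  have hpM : ∀ i, p i ≤ M := fun i => by
    rw [hpe i]; exact Real.exp_le_exp.mpr (hLmax i)
  have hcard : (Finset.univ : Finset (Fin (n+1))).card = n + 1 := by simp
  have hsumL : ∑ i, L i = N * Lbar := by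
    rw [hLbar]; field_simp
  have hLbarmax : Lbar ≤ maxL := by
    have h1 : ∑ i, L i ≤ ∑ _i : Fin (n+1), maxL := Finset.sum_le_sum fun i _ => hLmax i
    rw [Finset.sum_const, hcard, nsmul_eq_mul] at h1
    rw [hsumL] at h1
    push_cast [hN] at h1
    have : N * Lbar ≤ N * maxL := by rw [hN]; push_cast; linarith
    exact le_of_mul_le_mul_left this Npos
  have hbM : b ≤ M := Real.exp_le_exp.mpr hLbarmax
  -- centered sums
  set S := ∑ i, (L i - Lbar) ^ 2 with hS
  have hSnn : 0 ≤ S := Finset.sum_nonneg fun i _ => sq_nonneg _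
  have hdsum : ∑ i, (L i - Lbar) = 0 := by
    rw [Finset.sum_sub_distrib, hsumL, Finset.sum_const, hcard]
    push_cast [hN]
    ring
  have hdouble : (∑ i, ∑ j, (L i - L j) ^ 2) = 2 * N * S := by
    have hexp : ∀ i j : Fin (n+1), (L i - L j) ^ 2 =
        (L i - Lbar) ^ 2 + (L j - Lbar) ^ 2 - 2 * ((L i - Lbar) * (L j - Lbar)) := by
      intro i j; ring
    calc (∑ i, ∑ j, (L i - L j) ^ 2)
        = ∑ i, ((∑ _j : Fin (n+1), (L i - Lbar) ^ 2) + S - 2 * ((L i - Lbar) * ∑ j, (L j - Lbar))) := by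
          apply Finset.sum_congr rfl
          intro i _
          simp_rw [hexp]
          rw [Finset.sum_sub_distrib, Finset.sum_add_distrib, ← Finset.mul_sum, ← Finset.mul_sum]
    _ = ∑ i, (N * (L i - Lbar) ^ 2 + S) := by
          apply Finset.sum_congr rfl
          intro i _
          rw [hdsum, Finset.sum_const, hcard]
          push_cast [hN]
          ring
    _ = N * S + N * S := by
          rw [Finset.sum_add_distrib, ← Finset.mul_sum, Finset.sum_const, hcard]
          push_cast [hN]
          ring
    _ = 2 * N * S := by ring
  -- pointwise bound
  set Q := ∑ i, (p i - b) ^ 2 with hQ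
  have hQnn : 0 ≤ Q := Finset.sum_nonneg fun i _ => sq_nonneg _
  have hpoint : ∀ i, hw⁻¹ ^ 2 * (L i - Lbar) ^ 2 ≤ (p i - b) ^ 2 / M ^ 2 := by
    intro i
    have h1 : hw⁻¹ ^ 2 ≤ p i * b / M ^ 2 := by
      rw [hhw, hpe i, hb, hM]
      rw [show Real.exp (L i) * Real.exp Lbar / Real.exp maxL ^ 2
            = Real.exp (L i + Lbar - 2 * maxL) by
        rw [sq, ← Real.exp_add, ← Real.exp_add, Real.exp_sub]; ring_nf]
      exact Real.exp_le_exp.mpr (by linarith [hLmin i])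
    have h2 : (L i - Lbar) ^ 2 * (p i * b) ≤ (p i - b) ^ 2 := by
      have h := aux_logmean18' (p i) b (hp i) hbpos
      have hlogb : Real.log b = Lbar := by rw [hb, Real.log_exp]
      rw [hL i, ← hlogb]
      exact h
    calc hw⁻¹ ^ 2 * (L i - Lbar) ^ 2 ≤ (p i * b / M ^ 2) * (L i - Lbar) ^ 2 :=
          mul_le_mul_of_nonneg_right h1 (sq_nonneg _)
    _ = ((L i - Lbar) ^ 2 * (p i * b)) / M ^ 2 := by ring
    _ ≤ (p i - b) ^ 2 / M ^ 2 := by gcongr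
  have hpb_le : ∀ i, (p i - b) ^ 2 ≤ M ^ 2 := by
    intro i
    nlinarith [hp i, hbpos, hpM i, hbM]
  have hsum1 : hw⁻¹ ^ 2 * S ≤ Q / M ^ 2 := by
    rw [hS, Finset.mul_sum, hQ, Finset.sum_div]
    exact Finset.sum_le_sum fun i _ => hpoint i
  have hsum2 : hw⁻¹ ^ 2 * S ≤ N := by
    calc hw⁻¹ ^ 2 * S ≤ Q / M ^ 2 := hsum1
    _ = ∑ i, (p i - b) ^ 2 / M ^ 2 := by rw [hQ, Finset.sum_div]
    _ ≤ ∑ _i : Fin (n+1), (1:ℝ) := by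
          apply Finset.sum_le_sum
          intro i _
          rw [div_le_one (by positivity)]
          exact hpb_le i
    _ = N := by rw [Finset.sum_const, hcard]; push_cast [hN]; ring
  -- quadratic log bound summed
  have hjensen : Q / (2 * M ^ 2) ≤ (∑ i, p i) / b - N := by
    set c := M / b with hc
    have hc1 : 1 ≤ c := (one_le_div hbpos).mpr hbM
    have hkey : ∀ i, Real.log (p i / b) ≤ (p i / b - 1) - (p i / b - 1) ^ 2 / (2 * c ^ 2) :=
      fun i => aux_quadlog18 hc1 (div_pos (hp i) hbpos) (by
        rw [hc]
        gcongr
        exact hpM i)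
    have hsum := Finset.sum_le_sum (fun i (_ : i ∈ Finset.univ) => hkey i)
    have hlhs : ∑ i, Real.log (p i / b) = 0 := by
      have : ∀ i, Real.log (p i / b) = L i - Lbar := by
        intro i
        rw [Real.log_div (ne_of_gt (hp i)) (ne_of_gt hbpos), ← hL, hb, Real.log_exp]
      simp_rw [this]
      exact hdsum
    rw [hlhs] at hsum
    have hrhs : ∑ i, ((p i / b - 1) - (p i / b - 1) ^ 2 / (2 * c ^ 2))
        = ((∑ i, p i) / b - N) - Q / (2 * M ^ 2) := by
      rw [Finset.sum_sub_distrib, Finset.sum_sub_distrib]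
      congr 1
      · rw [Finset.sum_div, Finset.sum_const, hcard]
        congr 1
        push_cast [hN]
        ring
      · rw [hQ, Finset.sum_div]
        apply Finset.sum_congr rfl
        intro i _
        rw [hc]
        field_simp
        try ring
    rw [hrhs] at hsum
    linarith
  have hsum_ge : N ≤ (∑ i, p i) / b := by
    have : 0 ≤ Q / (2 * M ^ 2) := by positivity
    linarith
  have hsp : 0 < ∑ i, p i := Finset.sum_pos (fun i _ => hp i) Finset.univ_nonempty
  -- reduce goal
  set μ := (∑ i, p i) / (N * b) with hμ
  have hμpos : 0 < μ := div_pos hsp (by positivity)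
  have hμ1 : 1 + Q / (2 * M ^ 2) / N ≤ μ := by
    have h1 : N + Q / (2 * M ^ 2) ≤ (∑ i, p i) / b := by linarith
    have h2 : (N + Q / (2 * M ^ 2)) / N ≤ ((∑ i, p i) / b) / N := by gcongr
    have h3 : ((∑ i, p i) / b) / N = μ := by
      rw [hμ, div_div, mul_comm]
    have h4 : (N + Q / (2 * M ^ 2)) / N = 1 + Q / (2 * M ^ 2) / N := by
      field_simp
    linarith [h2, h3.symm ▸ h2]
  have hμge1 : 1 ≤ μ := by
    have : 0 ≤ Q / (2 * M ^ 2) / N := by positivity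
    linarith
  set P := hw⁻¹ ^ 2 * S / (4 * N) with hP
  have hP1 : P ≤ (μ - 1) / 2 := by
    have h1 : P ≤ (Q / M ^ 2) / (4 * N) := by
      rw [hP]
      gcongr
    have h2 : (Q / M ^ 2) / (4 * N) = (Q / (2 * M ^ 2) / N) / 2 := by
      rw [div_div, div_div, div_div]
      congr 1
      ring
    linarith [hμ1]
  have hP2 : P ≤ 1 / 4 := by
    have h1 : P ≤ N / (4 * N) := by rw [hP]; gcongr
    have h2 : N / (4 * N) = 1 / 4 := by
      field_simp
    linarith
  have hlogμ : P ≤ Real.log μ := by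
    have hlb : 1 - μ⁻¹ ≤ Real.log μ := Real.one_sub_inv_le_log_of_pos hμpos
    have hμinv : μ * μ⁻¹ = 1 := mul_inv_cancel₀ (ne_of_gt hμpos)
    rcases le_total μ 2 with hcase | hcase
    · have : (μ - 1) / 2 ≤ 1 - μ⁻¹ := by nlinarith
      linarith
    · have hinvpos : 0 < μ⁻¹ := inv_pos.mpr hμpos
      have : μ⁻¹ ≤ 1 / 2 := by nlinarith [hμinv]
      linarith
  -- finish
  have hlogm : Real.log ((∑ i, p i) / N) = Real.log μ + Lbar := by
    rw [hμ, hb, Real.log_div (ne_of_gt hsp) (ne_of_gt Npos),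
      Real.log_div (ne_of_gt hsp) (by positivity),
      Real.log_mul (ne_of_gt Npos) (by positivity), Real.log_exp]
    ring
  have hcoef : (1 / (2 * (2 * hw) ^ 2 * N ^ 2)) * (2 * N * S) = P := by
    rw [hP]
    have hhwne : hw ≠ 0 := ne_of_gt hwpos
    field_simp
    ring
  rw [hdouble, hcoef, hlogm]
  linarith
end
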